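/- Let k^{a₁…a_ℓ} be a Killing ℓ-tensor on ℝ^n that is trace-free, i.e. g_{a₁a₂} k^{a₁a₂a₃…a_ℓ} = 0. Then the ℓ-th order differential operator D defined on smooth functions f : ℝ^n → ℝ by D f = k^{a₁…a_ℓ} ∂_{a₁}⋯∂_{a_ℓ} f commutes with the Laplace operator: Δ∘D = D∘Δ on smooth functions. -/

import Mathlib

noncomputable section

/-- Partial derivative `∂_a f` in the `a`-th coordinate direction on `ℝⁿ`. -/
def pd {n : ℕ} (a : Fin n) (f : (Fin n → ℝ) → ℝ) : (Fin n → ℝ) → ℝ :=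
  fun x => fderiv ℝ f x (Pi.single a 1)

/-- Raised partial derivative `∂^a f = g^{ab} ∂_b f`. -/
def pdUp {n : ℕ} (ginv : Matrix (Fin n) (Fin n) ℝ) (a : Fin n)
    (f : (Fin n → ℝ) → ℝ) : (Fin n → ℝ) → ℝ :=
  fun x => ∑ b, ginv a b * pd b f x

/-- Laplace operator `Δ f = g^{ab} ∂_a ∂_b f`. -/
def lap {n : ℕ} (ginv : Matrix (Fin n) (Fin n) ℝ) (f : (Fin n → ℝ) → ℝ) :
    (Fin n → ℝ) → ℝ :=
  fun x => ∑ a, ∑ b, ginv a b * pd a (pd b f) x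

/-- Iterated partial derivative `∂_{i 0} ⋯ ∂_{i (m-1)} f` along a tuple of indices. -/
def pdIter {n : ℕ} : (m : ℕ) → (Fin m → Fin n) → ((Fin n → ℝ) → ℝ) → ((Fin n → ℝ) → ℝ)
  | 0, _, f => f
  | m + 1, i, f => pd (i 0) (pdIter m (fun j => i j.succ) f)

/-- A (smooth, totally symmetric) Killing `ℓ`-tensor: `∂^{(a₀} k^{a₁…a_ℓ)} = 0`. -/
def IsKillingTensor {n : ℕ} (ginv : Matrix (Fin n) (Fin n) ℝ) (ℓ : ℕ)
    (k : (Fin ℓ → Fin n) → (Fin n → ℝ) → ℝ) : Prop :=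
  (∀ i, ContDiff ℝ (⊤ : ℕ∞) (k i)) ∧
  (∀ (σ : Equiv.Perm (Fin ℓ)) (i : Fin ℓ → Fin n), k (i ∘ σ) = k i) ∧
  (∀ (i : Fin (ℓ + 1) → Fin n) (x : Fin n → ℝ),
    ∑ σ : Equiv.Perm (Fin (ℓ + 1)),
      pdUp ginv (i (σ 0)) (k (fun j => i (σ j.succ))) x = 0)

end

/-!
Write `D f = ∑_I k^I ∂_I f`. By the Leibniz rule,
`Δ (D f) - D (Δ f) = ∑_I (Δ k^I) ∂_I f + 2 ∑_I ∂^a k^I ∂_a ∂_I f`.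
The second sum vanishes because `∂_a ∂_I f` is totally symmetric in `(a, I)`, so it only sees the
symmetrisation `∂^(a k^I)`, which is zero. For the first, contracting the Killing equation with
`g` shows that a trace-free Killing tensor is divergence-free; differentiating the Killing
equation and contracting once more then gives `Δ k^I = 0`.
-/

open scoped ContDiff

section Calculus

variable {n : ℕ}

theorem pd_fun_sum {ι : Type*} (s : Finset ι) (F : ι → (Fin n → ℝ) → ℝ) (a : Fin n)
    {x : Fin n → ℝ} (hF : ∀ j ∈ s, DifferentiableAt ℝ (F j) x) :
    pd a (fun y => ∑ j ∈ s, F j y) x = ∑ j ∈ s, pd a (F j) x := by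
  simp [pd, fderiv_fun_sum hF]

theorem pd_const_mul (c : ℝ) {F : (Fin n → ℝ) → ℝ} (a : Fin n) {x : Fin n → ℝ}
    (hF : DifferentiableAt ℝ F x) : pd a (fun y => c * F y) x = c * pd a F x := by
  simp [pd, fderiv_const_mul hF]

theorem pd_add {F G : (Fin n → ℝ) → ℝ} (a : Fin n) {x : Fin n → ℝ}
    (hF : DifferentiableAt ℝ F x) (hG : DifferentiableAt ℝ G x) :
    pd a (fun y => F y + G y) x = pd a F x + pd a G x := by
  simp [pd, fderiv_fun_add hF hG]

theorem pd_mul {F G : (Fin n → ℝ) → ℝ} (a : Fin n) {x : Fin n → ℝ}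
    (hF : DifferentiableAt ℝ F x) (hG : DifferentiableAt ℝ G x) :
    pd a (fun y => F y * G y) x = pd a F x * G x + F x * pd a G x := by
  simp only [pd, fderiv_fun_mul hF hG, add_apply, smul_apply, smul_eq_mul]
  ring

theorem pd_const (c : ℝ) (a : Fin n) : pd a (fun _ => c) = 0 := by
  ext x; simp [pd]

theorem ContDiff.pd {f : (Fin n → ℝ) → ℝ} (hf : ContDiff ℝ ∞ f) (a : Fin n) :
    ContDiff ℝ ∞ (pd a f) :=
  (hf.fderiv_right (by simp)).clm_apply contDiff_const

theorem pd_comm {f : (Fin n → ℝ) → ℝ} (hf : ContDiff ℝ 2 f) (a b : Fin n) :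
    pd a (pd b f) = pd b (pd a f) := by
  ext x
  have hsymm : IsSymmSndFDerivAt ℝ f x :=
    hf.contDiffAt.isSymmSndFDerivAt (by simp)
  have hd : DifferentiableAt ℝ (fderiv ℝ f) x :=
    (hf.fderiv_right (m := 1) le_rfl).differentiable (by simp) x
  have hpd : ∀ v w, pd v (pd w f) x = fderiv ℝ (fderiv ℝ f) x (Pi.single v 1) (Pi.single w 1) := by
    intro v w
    change fderiv ℝ (fun y => fderiv ℝ f y (Pi.single w 1)) x _ = _
    rw [fderiv_clm_apply hd (differentiableAt_const _)]
    simp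
  rw [hpd, hpd, hsymm]

end Calculus

section Operators

variable {n : ℕ} (ginv : Matrix (Fin n) (Fin n) ℝ)

theorem ContDiff.pdUp {f : (Fin n → ℝ) → ℝ} (hf : ContDiff ℝ ∞ f) (a : Fin n) :
    ContDiff ℝ ∞ (pdUp ginv a f) :=
  ContDiff.sum fun b _ => contDiff_const.mul (hf.pd b)

theorem pdUp_fun_sum {ι : Type*} (s : Finset ι) (F : ι → (Fin n → ℝ) → ℝ) (a : Fin n)
    {x : Fin n → ℝ} (hF : ∀ j ∈ s, DifferentiableAt ℝ (F j) x) :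
    pdUp ginv a (fun y => ∑ j ∈ s, F j y) x = ∑ j ∈ s, pdUp ginv a (F j) x := by
  simp only [pdUp, pd_fun_sum s F _ hF, Finset.mul_sum]
  exact Finset.sum_comm

theorem pdUp_const_mul (c : ℝ) {F : (Fin n → ℝ) → ℝ} (a : Fin n) {x : Fin n → ℝ}
    (hF : DifferentiableAt ℝ F x) : pdUp ginv a (fun y => c * F y) x = c * pdUp ginv a F x := by
  simp only [pdUp, pd_const_mul c _ hF, Finset.mul_sum]
  exact Finset.sum_congr rfl fun b _ => mul_left_comm _ _ _

theorem pdUp_const (c : ℝ) (a : Fin n) : pdUp ginv a (fun _ => c) = 0 := by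
  ext x; simp [pdUp, pd_const]

theorem pd_pdUp {f : (Fin n → ℝ) → ℝ} (hf : ContDiff ℝ ∞ f) (a c : Fin n) :
    pd c (pdUp ginv a f) = pdUp ginv a (pd c f) := by
  ext x
  change pd c (fun y => ∑ b, ginv a b * pd b f y) x = ∑ b, ginv a b * pd b (pd c f) x
  rw [pd_fun_sum _ _ _ fun b _ => (contDiff_const.mul (hf.pd b)).differentiable (by simp) x]
  refine Finset.sum_congr rfl fun b _ => ?_
  rw [pd_const_mul _ _ ((hf.pd b).differentiable (by simp) x), pd_comm (hf.of_le (by norm_cast))]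

theorem sum_mul_pdUp {g : Matrix (Fin n) (Fin n) ℝ} (hginv : g * ginv = 1) (s : Fin n)
    (f : (Fin n → ℝ) → ℝ) (x : Fin n → ℝ) :
    ∑ r, g s r * pdUp ginv r f x = pd s f x := by
  simp only [pdUp, Finset.mul_sum, ← mul_assoc]
  rw [Finset.sum_comm]
  simp only [← Finset.sum_mul, ← Matrix.mul_apply, hginv, Matrix.one_apply, ite_mul, one_mul,
    zero_mul, Finset.sum_ite_eq, Finset.mem_univ, if_true]

theorem lap_eq_sum_pd_pdUp {f : (Fin n → ℝ) → ℝ} (hf : ContDiff ℝ ∞ f) (x : Fin n → ℝ) :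
    lap ginv f x = ∑ a, pd a (pdUp ginv a f) x := by
  refine Finset.sum_congr rfl fun a _ => ?_
  change _ = pd a (fun y => ∑ b, ginv a b * pd b f y) x
  rw [pd_fun_sum _ _ _ fun b _ => (contDiff_const.mul (hf.pd b)).differentiable (by simp) x]
  exact Finset.sum_congr rfl fun b _ =>
    (pd_const_mul _ _ ((hf.pd b).differentiable (by simp) x)).symm

theorem lap_fun_sum {ι : Type*} (s : Finset ι) (F : ι → (Fin n → ℝ) → ℝ)
    (hF : ∀ j ∈ s, ContDiff ℝ ∞ (F j)) (x : Fin n → ℝ) :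
    lap ginv (fun y => ∑ j ∈ s, F j y) x = ∑ j ∈ s, lap ginv (F j) x := by
  have hpd : ∀ b, pd b (fun y => ∑ j ∈ s, F j y) = fun y => ∑ j ∈ s, pd b (F j) y := fun b =>
    funext fun y => pd_fun_sum s F b fun j hj => (hF j hj).differentiable (by simp) y
  have hpd2 : ∀ a b, pd a (fun y => ∑ j ∈ s, pd b (F j) y) x = ∑ j ∈ s, pd a (pd b (F j)) x :=
    fun a b => pd_fun_sum s _ a fun j hj => ((hF j hj).pd b).differentiable (by simp) x
  simp only [lap, hpd, hpd2, Finset.mul_sum]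
  calc _ = ∑ a, ∑ j ∈ s, ∑ b, ginv a b * pd a (pd b (F j)) x :=
        Finset.sum_congr rfl fun a _ => Finset.sum_comm
    _ = _ := Finset.sum_comm

end Operators

theorem lap_mul {n : ℕ} {ginv : Matrix (Fin n) (Fin n) ℝ} (hsymm : ginv.IsSymm)
    {F G : (Fin n → ℝ) → ℝ} (hF : ContDiff ℝ ∞ F) (hG : ContDiff ℝ ∞ G) (x : Fin n → ℝ) :
    lap ginv (fun y => F y * G y) x
      = lap ginv F x * G x + 2 * ∑ a, pdUp ginv a F x * pd a G x + F x * lap ginv G x := by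
  have hd {f : (Fin n → ℝ) → ℝ} (hf : ContDiff ℝ ∞ f) (y) : DifferentiableAt ℝ f y :=
    hf.differentiable (by simp) y
  have leibniz : ∀ a b, pd a (pd b (fun y => F y * G y)) x
      = pd a (pd b F) x * G x + pd b F x * pd a G x
        + (pd a F x * pd b G x + F x * pd a (pd b G) x) := by
    intro a b
    have hfirst : pd b (fun y => F y * G y) = fun y => pd b F y * G y + F y * pd b G y :=
      funext fun y => pd_mul b (hd hF y) (hd hG y)
    rw [hfirst, pd_add a (hd ((hF.pd b).mul hG) x) (hd (hF.mul (hG.pd b)) x),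
      pd_mul a (hd (hF.pd b) x) (hd hG x), pd_mul a (hd hF x) (hd (hG.pd b) x)]
  have cross : ∑ a, ∑ b, ginv a b * (pd a F x * pd b G x)
      = ∑ a, ∑ b, ginv a b * (pd b F x * pd a G x) := by
    rw [Finset.sum_comm]
    exact Finset.sum_congr rfl fun a _ => Finset.sum_congr rfl fun b _ => by
      rw [hsymm.apply a b]
  simp only [lap, leibniz, mul_add, Finset.sum_add_distrib, cross]
  simp only [pdUp, Finset.mul_sum, Finset.sum_mul, ← Finset.sum_add_distrib]
  exact Finset.sum_congr rfl fun a _ => Finset.sum_congr rfl fun b _ => by ring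

section Iterated

variable {n : ℕ} {f : (Fin n → ℝ) → ℝ}

theorem pd_lap (ginv : Matrix (Fin n) (Fin n) ℝ) (hf : ContDiff ℝ ∞ f) (a : Fin n) :
    pd a (lap ginv f) = lap ginv (pd a f) := by
  have hlap : lap ginv f = fun y => ∑ b, pd b (pdUp ginv b f) y :=
    funext (lap_eq_sum_pd_pdUp ginv hf)
  ext x
  rw [hlap, pd_fun_sum _ _ _ fun b _ => ((hf.pdUp ginv b).pd b).differentiable (by simp) x,
    lap_eq_sum_pd_pdUp ginv (hf.pd a)]
  refine Finset.sum_congr rfl fun b _ => ?_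
  rw [pd_comm ((hf.pdUp ginv b).of_le (by norm_cast)), pd_pdUp ginv hf]

theorem ContDiff.pdIter (hf : ContDiff ℝ ∞ f) (M : ℕ) (i : Fin M → Fin n) :
    ContDiff ℝ ∞ (pdIter M i f) := by
  induction M with
  | zero => exact hf
  | succ M ih => exact (ih _).pd _

theorem pdIter_lap (ginv : Matrix (Fin n) (Fin n) ℝ) (hf : ContDiff ℝ ∞ f) (M : ℕ)
    (i : Fin M → Fin n) : pdIter M i (lap ginv f) = lap ginv (pdIter M i f) := by
  induction M with
  | zero => rfl
  | succ M ih => exact (congrArg (pd (i 0)) (ih _)).trans (pd_lap ginv (hf.pdIter M _) (i 0))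

theorem pdIter_cons (M : ℕ) (a : Fin n) (i : Fin M → Fin n) :
    pdIter (M + 1) (Fin.cons a i) f = pd a (pdIter M i f) := rfl

theorem pdIter_insertNth (hf : ContDiff ℝ ∞ f) (M : ℕ) (p : Fin (M + 1)) (a : Fin n)
    (i : Fin M → Fin n) : pdIter (M + 1) (p.insertNth a i) f = pd a (pdIter M i f) := by
  induction M with
  | zero => rw [Fin.fin_one_eq_zero p, Fin.insertNth_zero', pdIter_cons]
  | succ M ih =>
    cases p using Fin.cases with
    | zero => rw [Fin.insertNth_zero', pdIter_cons]
    | succ q =>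
      rw [← Fin.cons_self_tail i, Fin.insertNth_succ_cons, pdIter_cons, pdIter_cons, ih,
        pd_comm ((hf.pdIter M _).of_le (by norm_cast))]

end Iterated

theorem Fin.removeNth_succ_cons {α : Type*} {L : ℕ} (c : α) (I : Fin (L + 1) → α)
    (q : Fin (L + 1)) :
    q.succ.removeNth (Fin.cons c I : Fin (L + 2) → α) = Fin.cons c (q.removeNth I) :=
  Fin.cons_comp_succ_succAbove c I q

section Killing

variable {n : ℕ} {ginv : Matrix (Fin n) (Fin n) ℝ}

def swapZeroPerm {M : ℕ} (p : Fin (M + 1)) : Equiv.Perm (Fin M) :=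
  Fin.cases (Equiv.refl _) Fin.cycleRange p

theorem succAbove_swapZeroPerm {M : ℕ} (p : Fin (M + 1)) (t : Fin M) :
    p.succAbove (swapZeroPerm p t) = Equiv.swap 0 p t.succ := by
  cases p using Fin.cases with
  | zero => simp [swapZeroPerm]
  | succ q => simp [swapZeroPerm, Fin.succAbove_cycleRange]

/-- The `(ℓ + 1)!` terms of the symmetrisation are grouped by `p = σ 0`: by the symmetry of `k`,
the `ℓ!` permutations in each group contribute the same term. -/
theorem IsKillingTensor.sum_pdUp_removeNth_eq_zero {ℓ : ℕ}
    {k : (Fin ℓ → Fin n) → (Fin n → ℝ) → ℝ} (hk : IsKillingTensor ginv ℓ k)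
    (I : Fin (ℓ + 1) → Fin n) (x : Fin n → ℝ) :
    ∑ p, pdUp ginv (I p) (k (p.removeNth I)) x = 0 := by
  have h := hk.2.2 I x
  rw [← Equiv.sum_comp Equiv.Perm.decomposeFin.symm, Fintype.sum_prod_type] at h
  have hterm : ∀ p (τ : Equiv.Perm (Fin ℓ)),
      pdUp ginv (I (Equiv.Perm.decomposeFin.symm (p, τ) 0))
        (k (fun j => I (Equiv.Perm.decomposeFin.symm (p, τ) j.succ))) x
        = pdUp ginv (I p) (k (p.removeNth I)) x := by
    intro p τ
    have hperm : (fun j => I (Equiv.Perm.decomposeFin.symm (p, τ) j.succ))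
        = p.removeNth I ∘ (τ.trans (swapZeroPerm p)) := by
      ext j
      simp [Fin.removeNth_apply, Equiv.Perm.decomposeFin_symm_apply_succ,
        succAbove_swapZeroPerm]
    rw [Equiv.Perm.decomposeFin_symm_apply_zero, hperm, hk.2.1]
  simp only [hterm, Finset.sum_const, Finset.card_univ, nsmul_eq_mul] at h
  rw [← Finset.mul_sum] at h
  exact (mul_eq_zero.1 h).resolve_left (by positivity)

theorem IsKillingTensor.pdUp_add_sum_pdUp_cons_eq_zero {L : ℕ}
    {k : (Fin (L + 1) → Fin n) → (Fin n → ℝ) → ℝ} (hk : IsKillingTensor ginv (L + 1) k)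
    (c : Fin n) (I : Fin (L + 1) → Fin n) (x : Fin n → ℝ) :
    pdUp ginv c (k I) x + ∑ q, pdUp ginv (I q) (k (Fin.cons c (q.removeNth I))) x = 0 := by
  simpa [Fin.sum_univ_succ, Fin.removeNth_succ_cons] using
    hk.sum_pdUp_removeNth_eq_zero (Fin.cons c I) x

end Killing

section TraceFree

def IsTraceFree {n m : ℕ} (g : Matrix (Fin n) (Fin n) ℝ)
    (k : (Fin (m + 2) → Fin n) → (Fin n → ℝ) → ℝ) : Prop :=
  ∀ (rest : Fin m → Fin n) (x : Fin n → ℝ),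
    ∑ r, ∑ s, g r s * k (Fin.cons r (Fin.cons s rest)) x = 0

variable {n m : ℕ} {g ginv : Matrix (Fin n) (Fin n) ℝ}
  {k : (Fin (m + 2) → Fin n) → (Fin n → ℝ) → ℝ}

theorem IsTraceFree.sum_sum_mul_pdUp_eq_zero (htf : IsTraceFree g k)
    (hk : ∀ i, Differentiable ℝ (k i)) (rest : Fin m → Fin n) (a : Fin n) (x : Fin n → ℝ) :
    ∑ r, ∑ s, g r s * pdUp ginv a (k (Fin.cons r (Fin.cons s rest))) x = 0 := by
  calc ∑ r, ∑ s, g r s * pdUp ginv a (k (Fin.cons r (Fin.cons s rest))) x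
      = ∑ r, pdUp ginv a (fun y => ∑ s, g r s * k (Fin.cons r (Fin.cons s rest)) y) x :=
        Finset.sum_congr rfl fun r _ =>
          (Finset.sum_congr rfl fun s _ => (pdUp_const_mul _ _ _ (hk _ x)).symm).trans
            (pdUp_fun_sum _ _ _ _ fun s _ => (hk _).const_mul _ x).symm
    _ = pdUp ginv a (fun y => ∑ r, ∑ s, g r s * k (Fin.cons r (Fin.cons s rest)) y) x :=
        (pdUp_fun_sum _ _ _ _ fun r _ =>
          (Differentiable.fun_sum fun s _ => (hk _).const_mul _) x).symm
    _ = 0 := by rw [funext (htf rest), pdUp_const]; rfl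

/-- Contract the Killing equation with `g` over its first two slots: the two terms carrying the
contracted indices both give the divergence, the others vanish by trace-freeness. -/
theorem IsKillingTensor.sum_pd_cons_eq_zero (hgsym : g.IsSymm) (hginv : g * ginv = 1)
    (hk : IsKillingTensor ginv (m + 2) k) (htf : IsTraceFree g k)
    (rest : Fin (m + 1) → Fin n) (x : Fin n → ℝ) :
    ∑ s, pd s (k (Fin.cons s rest)) x = 0 := by
  have hkilling : ∀ r s : Fin n, pdUp ginv r (k (Fin.cons s rest)) x
      + (pdUp ginv s (k (Fin.cons r rest)) x
        + ∑ t, pdUp ginv (rest t) (k (Fin.cons r (Fin.cons s (t.removeNth rest)))) x) = 0 := by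
    intro r s
    simpa [Fin.sum_univ_succ, Fin.removeNth_succ_cons] using
      hk.pdUp_add_sum_pdUp_cons_eq_zero r (Fin.cons s rest) x
  have hcontract := congrArg (fun F => ∑ r, ∑ s, g r s * F r s) (funext₂ hkilling)
  simp only [mul_add, Finset.sum_add_distrib, mul_zero, Finset.sum_const_zero] at hcontract
  have hfirst : ∑ r, ∑ s, g r s * pdUp ginv r (k (Fin.cons s rest)) x
      = ∑ s, pd s (k (Fin.cons s rest)) x :=
    Finset.sum_comm.trans <| Finset.sum_congr rfl fun s _ =>
      (Finset.sum_congr rfl fun r _ => congrArg (· * _) (hgsym.apply s r)).trans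
        (sum_mul_pdUp ginv hginv s _ x)
  have hsecond : ∑ r, ∑ s, g r s * pdUp ginv s (k (Fin.cons r rest)) x
      = ∑ r, pd r (k (Fin.cons r rest)) x :=
    Finset.sum_congr rfl fun r _ => sum_mul_pdUp ginv hginv r _ x
  have hthird : ∑ r, ∑ s, g r s
      * ∑ t, pdUp ginv (rest t) (k (Fin.cons r (Fin.cons s (t.removeNth rest)))) x = 0 := by
    simp only [Finset.mul_sum]
    rw [(Finset.sum_congr rfl fun r _ => Finset.sum_comm).trans Finset.sum_comm]
    exact Finset.sum_eq_zero fun t _ => htf.sum_sum_mul_pdUp_eq_zero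
      (fun i => (hk.1 i).differentiable (by simp)) _ _ x
  linarith

/-- Apply `∂_c` to the Killing equation for the indices `(c, i)` and sum over `c`: apart from
`Δ k^i`, every term is a derivative of a divergence. -/
theorem IsKillingTensor.lap_eq_zero (hgsym : g.IsSymm) (hginv : g * ginv = 1)
    (hk : IsKillingTensor ginv (m + 2) k) (htf : IsTraceFree g k)
    (i : Fin (m + 2) → Fin n) (x : Fin n → ℝ) :
    lap ginv (k i) x = 0 := by
  have hd {f : (Fin n → ℝ) → ℝ} (hf : ContDiff ℝ ∞ f) : DifferentiableAt ℝ f x :=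
    hf.differentiable (by simp) x
  have hkilling : ∀ c, pd c (fun y => pdUp ginv c (k i) y
      + ∑ q, pdUp ginv (i q) (k (Fin.cons c (q.removeNth i))) y) x = 0 := fun c => by
    rw [funext (hk.pdUp_add_sum_pdUp_cons_eq_zero c i), pd_const]
    rfl
  have hsplit : ∀ c, pd c (fun y => pdUp ginv c (k i) y
      + ∑ q, pdUp ginv (i q) (k (Fin.cons c (q.removeNth i))) y) x
      = pd c (pdUp ginv c (k i)) x
        + ∑ q, pdUp ginv (i q) (pd c (k (Fin.cons c (q.removeNth i)))) x := fun c => by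
    rw [pd_add c (hd ((hk.1 i).pdUp ginv c))
        (hd (ContDiff.sum fun q _ => (hk.1 _).pdUp ginv _)),
      pd_fun_sum _ _ _ fun q _ => hd ((hk.1 _).pdUp ginv _)]
    simp only [pd_pdUp ginv (hk.1 _)]
  have hdiv : ∀ q : Fin (m + 2),
      pdUp ginv (i q) (fun y => ∑ c, pd c (k (Fin.cons c (q.removeNth i))) y) x = 0 := fun q => by
    rw [funext (hk.sum_pd_cons_eq_zero hgsym hginv htf (q.removeNth i)), pdUp_const]
    rfl
  calc lap ginv (k i) x = ∑ c, pd c (pdUp ginv c (k i)) x := lap_eq_sum_pd_pdUp ginv (hk.1 i) x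
    _ = -∑ q, ∑ c, pdUp ginv (i q) (pd c (k (Fin.cons c (q.removeNth i)))) x := by
      rw [Finset.sum_comm, eq_neg_iff_add_eq_zero, ← Finset.sum_add_distrib]
      exact Finset.sum_eq_zero fun c _ => (hsplit c).symm.trans (hkilling c)
    _ = 0 := by
      rw [neg_eq_zero]
      refine Finset.sum_eq_zero fun q _ => ?_
      rw [← hdiv q, pdUp_fun_sum _ _ _ _ fun c _ => hd ((hk.1 _).pd c)]

end TraceFree

/-- Pair the Killing equation with the symmetric tensor `∂_I f`: each of the `ℓ + 1` slots then
contributes the same sum. -/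
theorem IsKillingTensor.sum_sum_pdUp_mul_pd_pdIter_eq_zero {n ℓ : ℕ}
    {ginv : Matrix (Fin n) (Fin n) ℝ} {k : (Fin ℓ → Fin n) → (Fin n → ℝ) → ℝ}
    (hk : IsKillingTensor ginv ℓ k) {f : (Fin n → ℝ) → ℝ} (hf : ContDiff ℝ ∞ f)
    (x : Fin n → ℝ) :
    ∑ i, ∑ a, pdUp ginv a (k i) x * pd a (pdIter ℓ i f) x = 0 := by
  have hslot : ∀ p : Fin (ℓ + 1),
      ∑ I, pdUp ginv (I p) (k (p.removeNth I)) x * pdIter (ℓ + 1) I f x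
        = ∑ a, ∑ i, pdUp ginv a (k i) x * pd a (pdIter ℓ i f) x := fun p => by
    rw [← (Fin.insertNthEquiv (fun _ => Fin n) p).sum_comp, Fintype.sum_prod_type]
    simp [Fin.insertNthEquiv, pdIter_insertNth hf]
  have htotal : ∑ p : Fin (ℓ + 1),
      ∑ I, pdUp ginv (I p) (k (p.removeNth I)) x * pdIter (ℓ + 1) I f x = 0 := by
    rw [Finset.sum_comm]
    exact Finset.sum_eq_zero fun I _ => by
      rw [← Finset.sum_mul, hk.sum_pdUp_removeNth_eq_zero I x, zero_mul]
  simp only [hslot, Finset.sum_const, Finset.card_univ, Fintype.card_fin, nsmul_eq_mul] at htotal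
  rw [Finset.sum_comm]
  exact (mul_eq_zero.1 htotal).resolve_left (by positivity)

theorem stmt11_general {n m : ℕ}
    (g ginv : Matrix (Fin n) (Fin n) ℝ) (hgsym : g.IsSymm) (hginv : g * ginv = 1)
    (k : (Fin (m + 2) → Fin n) → (Fin n → ℝ) → ℝ)
    (hk : IsKillingTensor ginv (m + 2) k)
    (htf : ∀ (rest : Fin m → Fin n) (x : Fin n → ℝ),
      ∑ r, ∑ s, g r s * k (Fin.cons r (Fin.cons s rest)) x = 0)
    (D : ((Fin n → ℝ) → ℝ) → ((Fin n → ℝ) → ℝ))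
    (hD : ∀ f x, D f x = ∑ i : Fin (m + 2) → Fin n, k i x * pdIter (m + 2) i f x) :
    ∀ f, ContDiff ℝ (⊤ : ℕ∞) f → ∀ x, lap ginv (D f) x = D (lap ginv f) x := by
  intro f hf x
  have hginv_symm : ginv.IsSymm := Matrix.inv_eq_right_inv hginv ▸ hgsym.inv
  have hpdIter := hf.pdIter (m + 2)
  rw [funext (hD f), hD, lap_fun_sum _ _ _ fun i _ => (hk.1 i).mul (hpdIter i)]
  simp only [lap_mul hginv_symm (hk.1 _) (hpdIter _), hk.lap_eq_zero hgsym hginv htf, zero_mul,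
    zero_add, Finset.sum_add_distrib, ← Finset.mul_sum,
    hk.sum_sum_pdUp_mul_pd_pdIter_eq_zero hf, mul_zero, pdIter_lap ginv hf]

/-- for a trace-free Killing `ℓ`-tensor `k` (valence `ℓ = m + 2`,
`g_{a₁a₂} k^{a₁a₂a₃…a_ℓ} = 0`) on `ℝⁿ`, the operator
`D f = k^{a₁…a_ℓ} ∂_{a₁}⋯∂_{a_ℓ} f` commutes with the Laplacian. -/
theorem stmt11 {n m : ℕ} (hn : 0 < n)
    (g ginv : Matrix (Fin n) (Fin n) ℝ) (hgsym : g.IsSymm) (hginv : g * ginv = 1)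
    (k : (Fin (m + 2) → Fin n) → (Fin n → ℝ) → ℝ)
    (hk : IsKillingTensor ginv (m + 2) k)
    (htf : ∀ (rest : Fin m → Fin n) (x : Fin n → ℝ),
      ∑ r, ∑ s, g r s * k (Fin.cons r (Fin.cons s rest)) x = 0)
    (D : ((Fin n → ℝ) → ℝ) → ((Fin n → ℝ) → ℝ))
    (hD : ∀ f x, D f x = ∑ i : Fin (m + 2) → Fin n, k i x * pdIter (m + 2) i f x) :
    ∀ f, ContDiff ℝ (⊤ : ℕ∞) f → ∀ x, lap ginv (D f) x = D (lap ginv f) x :=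
  stmt11_general g ginv hgsym hginv k hk htf D hD
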